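/- arXiv:2412.13993 — 2 statements merged into one kernel-verified Lean document; each statement's English description precedes it below -/
import Mathlib

section
/- Let α ∈ (0,1), e₁,…,e_N nonnegative reals with mean ē and population standard deviation σ, and suppose α·ē + (1−α)·σ ≤ ε. Then max_i eᵢ ≤ ε·(1/α + sqrt(N−1)/(1−α)). -/
/-!
The loss bounds the mean by `ε / α` and the standard deviation by `ε / (1 - α)`, since both are
nonnegative. Samuelson's inequality `eᵢ ≤ ē + σ √(N - 1)` then bounds every single error: the
deviation of `eᵢ` from the mean is minus the sum of the other `N - 1` deviations, which
Cauchy–Schwarz controls by the remaining part of the variance.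
-/

open Finset

theorem sum_sub_div_card_eq_zero {ι : Type*} [Fintype ι] [Nonempty ι] (x : ι → ℝ) :
    ∑ j, (x j - (∑ k, x k) / Fintype.card ι) = 0 := by
  have hn : (Fintype.card ι : ℝ) ≠ 0 := by exact_mod_cast Fintype.card_ne_zero
  rw [sum_sub_distrib, sum_const, card_univ, nsmul_eq_mul, mul_div_cancel₀ _ hn, sub_self]

theorem card_mul_sq_le_of_sum_eq_zero {ι : Type*} [Fintype ι] (d : ι → ℝ)
    (hd : ∑ j, d j = 0) (i : ι) :
    Fintype.card ι * d i ^ 2 ≤ (Fintype.card ι - 1) * ∑ j, d j ^ 2 := by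
  classical
  have hi := mem_univ i
  have hdi : d i = -∑ j ∈ univ.erase i, d j := by
    linarith [add_sum_erase univ d hi]
  have hrest : ∑ j ∈ univ.erase i, d j ^ 2 = ∑ j, d j ^ 2 - d i ^ 2 := by
    linarith [add_sum_erase univ (fun j => d j ^ 2) hi]
  have hcard : ((univ.erase i).card : ℝ) = Fintype.card ι - 1 := by
    rw [card_erase_of_mem hi, card_univ, Nat.cast_pred (Fintype.card_pos_iff.mpr ⟨i⟩)]
  have hcs := sq_sum_le_card_mul_sum_sq (s := univ.erase i) (f := d)
  rw [← neg_sq, ← hdi, hrest, hcard] at hcs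
  linarith

/-- Samuelson's inequality. -/
theorem le_mean_add_sqrt_mul_stddev {ι : Type*} [Fintype ι] (x : ι → ℝ) (i : ι) :
    x i ≤ (∑ j, x j) / Fintype.card ι + Real.sqrt ((Fintype.card ι : ℝ) - 1) *
      Real.sqrt ((∑ j, (x j - (∑ k, x k) / Fintype.card ι) ^ 2) / Fintype.card ι) := by
  have : Nonempty ι := ⟨i⟩
  set n : ℝ := (Fintype.card ι : ℝ)
  set m := (∑ k, x k) / n
  have hn : 0 < n := Nat.cast_pos.mpr (Fintype.card_pos (α := ι))
  have hsq := card_mul_sq_le_of_sum_eq_zero (fun j => x j - m) (sum_sub_div_card_eq_zero x) i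
  rw [← Real.sqrt_mul' _ (by positivity)]
  suffices x i - m ≤ Real.sqrt ((n - 1) * ((∑ j, (x j - m) ^ 2) / n)) by linarith
  refine Real.le_sqrt_of_sq_le ?_
  rw [← mul_div_assoc, le_div_iff₀ hn]
  linarith

theorem stmt_5_general (N : ℕ) (α ε : ℝ) (hα0 : 0 < α) (hα1 : α < 1)
    (e : Fin N → ℝ) (he : ∀ i, 0 ≤ e i)
    (hL : α * ((∑ j, e j) / N) +
        (1 - α) * Real.sqrt ((∑ i, (e i - (∑ j, e j) / N) ^ 2) / N) ≤ ε) :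
    ∀ i, e i ≤ ε * (1 / α + Real.sqrt ((N : ℝ) - 1) / (1 - α)) := by
  intro i
  set m := (∑ j, e j) / N
  set σ := Real.sqrt ((∑ i, (e i - m) ^ 2) / N)
  have hβ : 0 < 1 - α := sub_pos.mpr hα1
  have hm : 0 ≤ m := div_nonneg (sum_nonneg fun j _ => he j) N.cast_nonneg
  have hσ : 0 ≤ σ := Real.sqrt_nonneg _
  have hmε : m ≤ ε / α := by
    rw [le_div_iff₀ hα0]; nlinarith
  have hσε : σ ≤ ε / (1 - α) := by
    rw [le_div_iff₀ hβ]; nlinarith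
  have hsam : e i ≤ m + Real.sqrt ((N : ℝ) - 1) * σ := by
    simpa only [Fintype.card_fin] using le_mean_add_sqrt_mul_stddev e i
  calc e i ≤ m + Real.sqrt ((N : ℝ) - 1) * σ := hsam
    _ ≤ ε / α + Real.sqrt ((N : ℝ) - 1) * (ε / (1 - α)) := by gcongr
    _ = ε * (1 / α + Real.sqrt ((N : ℝ) - 1) / (1 - α)) := by ring

theorem stmt_5 (N : ℕ) (hN : 1 ≤ N) (α ε : ℝ) (hα0 : 0 < α) (hα1 : α < 1)
    (e : Fin N → ℝ) (he : ∀ i, 0 ≤ e i)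
    (hL : α * ((∑ j, e j) / N) +
        (1 - α) * Real.sqrt ((∑ i, (e i - (∑ j, e j) / N) ^ 2) / N) ≤ ε) :
    ∀ i, e i ≤ ε * (1 / α + Real.sqrt ((N : ℝ) - 1) / (1 - α)) :=
  stmt_5_general N α ε hα0 hα1 e he hL
end

section
/- For reals e₁,…,e_N with mean ē and population standard deviation σ, one has ē + σ/sqrt(N−1) ≤ max_i eᵢ (for N ≥ 2, unless all eᵢ are equal, in which case equality holds with σ = 0). -/
/-!
Put `M = max eᵢ` and `d = M - ē`. The numbers `d - (eᵢ - ē)` are nonnegative and sum to `N d`,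
so the sum of their squares, which is `N d² + Σ (eᵢ - ē)²`, is at most `(N d)²`. Hence
`N σ² = Σ (eᵢ - ē)² ≤ N (N - 1) d²`, i.e. `σ / √(N - 1) ≤ d`.
-/

open Finset

variable {ι : Type*}

theorem Finset.sum_sq_le_of_sum_eq_zero_of_le {s : Finset ι} {x : ι → ℝ} {d : ℝ}
    (hsum : ∑ i ∈ s, x i = 0) (hle : ∀ i ∈ s, x i ≤ d) :
    ∑ i ∈ s, x i ^ 2 ≤ #s * (#s - 1) * d ^ 2 := by
  have hgap : ∑ i ∈ s, (d - x i) = #s * d := by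
    rw [sum_sub_distrib, hsum, sum_const, nsmul_eq_mul, sub_zero]
  have hgap_sq : ∑ i ∈ s, (d - x i) ^ 2 = #s * d ^ 2 + ∑ i ∈ s, x i ^ 2 := by
    simp only [sub_sq, sum_add_distrib, sum_sub_distrib, sum_const, nsmul_eq_mul,
      ← mul_sum, hsum]
    ring
  have := sum_sq_le_sq_sum_of_nonneg (fun i hi ↦ sub_nonneg.mpr (hle i hi))
  rw [hgap_sq, hgap] at this
  linarith

theorem Finset.mean_add_sqrt_variance_div_le_sup' {s : Finset ι} (hs : s.Nonempty)
    (e : ι → ℝ) :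
    (∑ j ∈ s, e j) / #s +
        Real.sqrt ((∑ i ∈ s, (e i - (∑ j ∈ s, e j) / #s) ^ 2) / #s) /
          Real.sqrt ((#s : ℝ) - 1) ≤
      s.sup' hs e := by
  set m := (∑ j ∈ s, e j) / #s
  set d := s.sup' hs e - m
  have hcard : (0 : ℝ) < #s := by exact_mod_cast hs.card_pos
  have hsum : ∑ i ∈ s, (e i - m) = 0 := by
    rw [sum_sub_distrib, sum_const, nsmul_eq_mul, mul_div_cancel₀ _ hcard.ne', sub_self]
  have hle : ∀ i ∈ s, e i - m ≤ d := fun i hi ↦ sub_le_sub_right (le_sup' e hi) m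
  have hd : 0 ≤ d := by
    have := sum_le_sum hle
    rw [hsum, sum_const, nsmul_eq_mul] at this
    exact nonneg_of_mul_nonneg_right this hcard
  have hvar : (∑ i ∈ s, (e i - m) ^ 2) / #s ≤ (#s - 1) * d ^ 2 := by
    rw [div_le_iff₀ hcard]
    linarith [sum_sq_le_of_sum_eq_zero_of_le hsum hle]
  have hσ : Real.sqrt ((∑ i ∈ s, (e i - m) ^ 2) / #s) ≤ Real.sqrt ((#s : ℝ) - 1) * d := by
    calc _ ≤ Real.sqrt ((#s - 1) * d ^ 2) := Real.sqrt_le_sqrt hvar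
      _ = _ := by rw [Real.sqrt_mul' _ (sq_nonneg d), Real.sqrt_sq hd]
  have : Real.sqrt ((∑ i ∈ s, (e i - m) ^ 2) / #s) / Real.sqrt ((#s : ℝ) - 1) ≤ d := by
    rcases (Real.sqrt_nonneg ((#s : ℝ) - 1)).eq_or_lt with h0 | hpos
    · -- `#s = 1`, where the quotient is the junk value `x / 0 = 0`
      rw [← h0, div_zero]; exact hd
    · rw [div_le_iff₀ hpos]; linarith
  linarith

theorem Finset.sup'_eq_of_forall_eq {α : Type*} [SemilatticeSup α] {s : Finset ι}
    (hs : s.Nonempty) {e : ι → α} {c : α}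
    (hc : ∀ i ∈ s, e i = c) : s.sup' hs e = c := by
  rw [sup'_congr hs rfl hc, sup'_const]

theorem stmt_15 (N : ℕ) (hN : 2 ≤ N) (e : Fin N → ℝ) :
    ((∑ j, e j) / N +
        Real.sqrt ((∑ i, (e i - (∑ j, e j) / N) ^ 2) / N) / Real.sqrt ((N : ℝ) - 1) ≤
      Finset.univ.sup' (Finset.univ_nonempty_iff.mpr ⟨⟨0, by omega⟩⟩) e) ∧
    ((∀ i j, e i = e j) →
      Real.sqrt ((∑ i, (e i - (∑ j, e j) / N) ^ 2) / N) = 0 ∧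
      (∑ j, e j) / N +
          Real.sqrt ((∑ i, (e i - (∑ j, e j) / N) ^ 2) / N) / Real.sqrt ((N : ℝ) - 1) =
        Finset.univ.sup' (Finset.univ_nonempty_iff.mpr ⟨⟨0, by omega⟩⟩) e) := by
  have hcard : #(univ : Finset (Fin N)) = N := by simp
  refine ⟨by simpa only [hcard] using mean_add_sqrt_variance_div_le_sup' (s := univ) _ e,
    fun hconst ↦ ?_⟩
  set i₀ : Fin N := ⟨0, by omega⟩
  have hmean : (∑ j, e j) / N = e i₀ := by
    rw [sum_congr rfl fun j _ ↦ hconst j i₀, sum_const, hcard, nsmul_eq_mul,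
      mul_div_cancel_left₀ _ (by positivity)]
  have hσ : Real.sqrt ((∑ i, (e i - (∑ j, e j) / N) ^ 2) / N) = 0 := by
    rw [hmean]
    simp [hconst _ i₀]
  refine ⟨hσ, ?_⟩
  rw [hσ, hmean, zero_div, add_zero, sup'_eq_of_forall_eq _ fun j _ ↦ hconst j i₀]
end
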